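/- (Pointwise Fisher consistency of the generalized ψ-loss.) Let K ≥ 1 be an integer and w : {−1,1}^K → ℝ, and define C_w(z) = Σ_{a ∈ {−1,1}^K} w(a) ψ(a ⊙ z) for z ∈ ℝ^K. Suppose w attains its maximum at a unique a₀ ∈ {−1,1}^K and w(a₀) > 0. Then every z ∈ ℝ^K attaining the minimum of C_w satisfies (a₀)_k z_k ≥ 1 for all k = 1, …, K; in particular, the sign of z_k equals (a₀)_k for every k. -/

import Mathlib

/-!
For `v = a ⊙ z` one has `0 ≤ ψ v ≤ 1`, with `ψ v = 1` as soon as some `v k ≤ 0` and `ψ v = 0`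
exactly when every `v k ≥ 1`. Two distinct sign vectors disagree in some coordinate, where one
of `a k z k`, `b k z k` is `≤ 0`; so at most one `a` has `ψ (a ⊙ z) < 1`, and
`C_w z = ∑ w - w b (1 - ψ (b ⊙ z))` for a single `b`. Comparing with `C_w a₀ = ∑ w - w a₀`
forces `b = a₀` and `ψ (a₀ ⊙ z) = 0`.
-/

/-- `Tgen s z = max (s - z 1, ..., s - z K, 0)`, the function `T_s` from the paper. -/
noncomputable def Tgen {K : ℕ} (s : ℝ) (z : Fin K → ℝ) : ℝ :=
  Finset.fold (· ⊔ ·) 0 (fun k => s - z k) Finset.univ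

/-- The generalized ψ-loss: `ψ z = T₁ z - T₀ z`. -/
noncomputable def psiLoss {K : ℕ} (z : Fin K → ℝ) : ℝ :=
  Tgen 1 z - Tgen 0 z

open scoped Classical in
/-- The set of sign vectors `{-1, 1}^K`, as a finset of `Fin K → ℝ`. -/
noncomputable def signVecs (K : ℕ) : Finset (Fin K → ℝ) :=
  Finset.image (fun (b : Fin K → Bool) (k : Fin K) => if b k then (1 : ℝ) else -1)
    Finset.univ

lemma mem_signVecs {K : ℕ} (a : Fin K → ℝ) :
    a ∈ signVecs K ↔ ∀ k, a k = 1 ∨ a k = -1 := by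
  classical
  unfold signVecs
  constructor
  · intro h k
    rw [Finset.mem_image] at h
    obtain ⟨b, -, rfl⟩ := h
    by_cases hb : b k <;> simp [hb]
  · intro h
    rw [Finset.mem_image]
    refine ⟨fun k => decide (a k = 1), Finset.mem_univ _, ?_⟩
    funext k
    rcases h k with h1 | h1 <;> norm_num [h1]

lemma signVecs_nonempty (K : ℕ) : (signVecs K).Nonempty :=
  ⟨fun _ => 1, (mem_signVecs _).mpr fun _ => Or.inl rfl⟩

section Tgen

variable {K : ℕ} (v : Fin K → ℝ)

lemma Tgen_le_iff {s c : ℝ} : Tgen s v ≤ c ↔ 0 ≤ c ∧ ∀ k, s - v k ≤ c := by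
  simp [Tgen, Finset.fold_max_le]

lemma Tgen_nonneg (s : ℝ) : 0 ≤ Tgen s v :=
  (Finset.le_fold_max _).2 (Or.inl le_rfl)

lemma sub_le_Tgen (s : ℝ) (k : Fin K) : s - v k ≤ Tgen s v :=
  (Finset.le_fold_max _).2 (Or.inr ⟨k, Finset.mem_univ k, le_rfl⟩)

lemma Tgen_le_Tgen_add {s t : ℝ} (ht : 0 ≤ t) : Tgen s v ≤ Tgen (s + t) v :=
  (Tgen_le_iff v).2 ⟨Tgen_nonneg v _, fun k => by linarith [sub_le_Tgen v (s + t) k]⟩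

lemma Tgen_add_le {s t : ℝ} (ht : 0 ≤ t) : Tgen (s + t) v ≤ Tgen s v + t :=
  (Tgen_le_iff v).2 ⟨by linarith [Tgen_nonneg v s], fun k => by linarith [sub_le_Tgen v s k]⟩

lemma Tgen_le_max_Tgen_add_sub (s t : ℝ) : Tgen s v ≤ max 0 (Tgen (s + t) v - t) :=
  (Tgen_le_iff v).2 ⟨le_max_left _ _,
    fun k => le_max_of_le_right (by linarith [sub_le_Tgen v (s + t) k])⟩

end Tgen

section psiLoss

variable {K : ℕ} {v : Fin K → ℝ}

lemma psiLoss_nonneg (v : Fin K → ℝ) : 0 ≤ psiLoss v := by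
  have := Tgen_le_Tgen_add v (s := 0) zero_le_one
  rw [zero_add] at this
  exact sub_nonneg.2 this

lemma psiLoss_le_one (v : Fin K → ℝ) : psiLoss v ≤ 1 := by
  have := Tgen_add_le v (s := 0) zero_le_one
  rw [zero_add] at this
  rw [psiLoss]
  linarith

lemma psiLoss_eq_one_of_nonpos {k : Fin K} (hk : v k ≤ 0) : psiLoss v = 1 := by
  have hT₁ : 1 ≤ Tgen 1 v := by linarith [sub_le_Tgen v 1 k]
  have hT₀ := Tgen_le_max_Tgen_add_sub v 0 1
  rw [zero_add, max_eq_right (by linarith)] at hT₀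
  exact le_antisymm (psiLoss_le_one v) (by rw [psiLoss]; linarith)

lemma psiLoss_eq_zero_iff : psiLoss v = 0 ↔ ∀ k, 1 ≤ v k := by
  constructor
  · intro h k
    by_contra! hk
    have hT₁ : 0 < Tgen 1 v := by linarith [sub_le_Tgen v 1 k]
    have hT₀ := Tgen_le_max_Tgen_add_sub v 0 1
    rw [zero_add] at hT₀
    have : Tgen 0 v < Tgen 1 v := hT₀.trans_lt (max_lt hT₁ (by linarith))
    rw [psiLoss] at h
    linarith
  · intro h
    have hT : ∀ s ≤ 1, Tgen s v = 0 := fun s hs =>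
      le_antisymm ((Tgen_le_iff v).2 ⟨le_rfl, fun k => by linarith [h k]⟩) (Tgen_nonneg v s)
    rw [psiLoss, hT 1 le_rfl, hT 0 zero_le_one, sub_zero]

end psiLoss

lemma psiLoss_mul_eq_one_or_of_ne {K : ℕ} {a b : Fin K → ℝ} (ha : a ∈ signVecs K)
    (hb : b ∈ signVecs K) (hab : a ≠ b) (z : Fin K → ℝ) :
    psiLoss (fun k => a k * z k) = 1 ∨ psiLoss (fun k => b k * z k) = 1 := by
  obtain ⟨k, hk⟩ := Function.ne_iff.1 hab
  have hba : b k = -a k := by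
    rcases (mem_signVecs a).1 ha k with h | h <;> rcases (mem_signVecs b).1 hb k with h' | h' <;>
      simp_all
  rcases le_total (a k * z k) 0 with h | h
  · exact Or.inl (psiLoss_eq_one_of_nonpos (k := k) h)
  · exact Or.inr (psiLoss_eq_one_of_nonpos (k := k) (by rw [hba]; linarith))

lemma psiLoss_mul_self {K : ℕ} {a : Fin K → ℝ} (ha : a ∈ signVecs K) :
    psiLoss (fun k => a k * a k) = 0 :=
  psiLoss_eq_zero_iff.2 fun k => by rcases (mem_signVecs a).1 ha k with h | h <;> simp [h]

lemma Real.sign_eq_of_one_le_mul {x t : ℝ} (hx : x = 1 ∨ x = -1) (h : 1 ≤ x * t) :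
    Real.sign t = x := by
  rcases hx with rfl | rfl
  · exact Real.sign_of_pos (by linarith)
  · exact Real.sign_of_neg (by linarith)

section WeightedSum

variable {ι : Type*} {S : Finset ι} {w p : ι → ℝ}

lemma Finset.sum_mul_eq_sum_sub_of_eq_one {b : ι} (hb : b ∈ S)
    (hone : ∀ a ∈ S, a ≠ b → p a = 1) :
    ∑ a ∈ S, w a * p a = ∑ a ∈ S, w a - w b * (1 - p b) := by
  have : ∑ a ∈ S, w a * (1 - p a) = w b * (1 - p b) :=
    Finset.sum_eq_single_of_mem b hb fun a ha hab => by rw [hone a ha hab, sub_self, mul_zero]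
  rw [← this, ← Finset.sum_sub_distrib]
  exact Finset.sum_congr rfl fun a _ => by ring

/-- `∑ w - w a₀` is the value of `∑ w p` at the indicator of `{a₀}ᶜ`. -/
lemma eq_zero_of_sum_mul_le_sum_sub {a₀ : ι} (ha₀ : a₀ ∈ S)
    (hmax : ∀ a ∈ S, a ≠ a₀ → w a < w a₀) (hpos : 0 < w a₀)
    (hp : ∀ a ∈ S, p a ∈ Set.Icc 0 1) (hone : ∀ a ∈ S, ∀ b ∈ S, a ≠ b → p a = 1 ∨ p b = 1)
    (hle : ∑ a ∈ S, w a * p a ≤ ∑ a ∈ S, w a - w a₀) : p a₀ = 0 := by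
  by_cases hb : ∃ b ∈ S, b ≠ a₀ ∧ p b ≠ 1
  · obtain ⟨b, hbS, hba₀, hpb⟩ := hb
    have hone_b : ∀ a ∈ S, a ≠ b → p a = 1 := fun a ha hab =>
      (hone a ha b hbS hab).resolve_right hpb
    rw [Finset.sum_mul_eq_sum_sub_of_eq_one hbS hone_b] at hle
    have hpb₁ : p b < 1 := lt_of_le_of_ne (hp b hbS).2 hpb
    nlinarith [mul_pos (sub_pos.2 (hmax b hbS hba₀)) (sub_pos.2 hpb₁),
      mul_nonneg hpos.le (hp b hbS).1]
  · push Not at hb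
    rw [Finset.sum_mul_eq_sum_sub_of_eq_one ha₀ hb] at hle
    nlinarith [(hp a₀ ha₀).1]

end WeightedSum

theorem stmt12_general (K : ℕ) (w : (Fin K → ℝ) → ℝ) (a₀ : Fin K → ℝ)
    (ha₀ : a₀ ∈ signVecs K)
    (hmax : ∀ a ∈ signVecs K, a ≠ a₀ → w a < w a₀)
    (hpos : 0 < w a₀) (z : Fin K → ℝ)
    (hmin : ∀ y : Fin K → ℝ,
      ∑ a ∈ signVecs K, w a * psiLoss (fun k => a k * z k)
        ≤ ∑ a ∈ signVecs K, w a * psiLoss (fun k => a k * y k)) :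
    (∀ k, 1 ≤ a₀ k * z k) ∧ ∀ k, Real.sign (z k) = a₀ k := by
  have hloss_a₀ : ∑ a ∈ signVecs K, w a * psiLoss (fun k => a k * a₀ k)
      = ∑ a ∈ signVecs K, w a - w a₀ := by
    rw [Finset.sum_mul_eq_sum_sub_of_eq_one ha₀ fun a ha hne =>
        (psiLoss_mul_eq_one_or_of_ne ha ha₀ hne a₀).resolve_right
          (by rw [psiLoss_mul_self ha₀]; norm_num),
      psiLoss_mul_self ha₀, sub_zero, mul_one]
  have hzero : psiLoss (fun k => a₀ k * z k) = 0 :=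
    eq_zero_of_sum_mul_le_sum_sub (p := fun a => psiLoss (fun k => a k * z k)) ha₀ hmax hpos
      (fun a _ => ⟨psiLoss_nonneg _, psiLoss_le_one _⟩)
      (fun a ha b hb hab => psiLoss_mul_eq_one_or_of_ne ha hb hab z)
      (hloss_a₀ ▸ hmin a₀)
  have hmargin := psiLoss_eq_zero_iff.1 hzero
  exact ⟨hmargin, fun k =>
    Real.sign_eq_of_one_le_mul ((mem_signVecs a₀).1 ha₀ k) (hmargin k)⟩

theorem stmt12 (K : ℕ) (hK : 1 ≤ K) (w : (Fin K → ℝ) → ℝ) (a₀ : Fin K → ℝ)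
    (ha₀ : a₀ ∈ signVecs K)
    (hmax : ∀ a ∈ signVecs K, a ≠ a₀ → w a < w a₀)
    (hpos : 0 < w a₀) (z : Fin K → ℝ)
    (hmin : ∀ y : Fin K → ℝ,
      ∑ a ∈ signVecs K, w a * psiLoss (fun k => a k * z k)
        ≤ ∑ a ∈ signVecs K, w a * psiLoss (fun k => a k * y k)) :
    (∀ k, 1 ≤ a₀ k * z k) ∧ ∀ k, Real.sign (z k) = a₀ k :=
  stmt12_general K w a₀ ha₀ hmax hpos z hmin
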